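/- arXiv:2005.01624 — 8 statements merged into one kernel-verified Lean document; each statement's English description precedes it below -/
import Mathlib

section
/- Every continuous partial operator F from Baire space to Baire space has a self-modulating modulus of continuity, i.e., a function μ : ⊆(Q→A) → (Q'→ list Q) such that μ is a modulus of continuity for F and μ is a modulus of continuity for itself. -/
/-!
Enumerate `Q` and only use moduli of the form "the first `n` questions". For each input take
the least `n` that works. If `ψ` agrees with `φ` on the first `n_φ` questions, then every `χ`
agreeing with `ψ` there also agrees with `φ`, so `n_φ` works for `ψ` and `n_ψ ≤ n_φ`; hence `φ`
and `ψ` agree on the first `n_ψ` questions and, symmetrically, `n_φ ≤ n_ψ`.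
-/

/-- `φ` and `ψ` agree on all questions in the list `L`. -/
def agreeOn {Q A : Type*} (φ ψ : Q → A) (L : List Q) : Prop :=
  ∀ q ∈ L, φ q = ψ q

namespace agreeOn

variable {Q A : Type*} {φ ψ χ : Q → A} {L L' : List Q}

theorem symm (h : agreeOn φ ψ L) : agreeOn ψ φ L :=
  fun q hq => (h q hq).symm

theorem trans (h₁ : agreeOn φ ψ L) (h₂ : agreeOn ψ χ L) : agreeOn φ χ L :=
  fun q hq => (h₁ q hq).trans (h₂ q hq)

theorem mono (hL : L ⊆ L') (h : agreeOn φ ψ L') : agreeOn φ ψ L :=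
  fun q hq => h q (hL hq)

end agreeOn

section InitialSegment

variable {Q : Type*} [Encodable Q]

def initialSegment (n : ℕ) : List Q :=
  (List.range n).filterMap (Encodable.decode₂ Q)

theorem mem_initialSegment {q : Q} {n : ℕ} : q ∈ initialSegment n ↔ Encodable.encode q < n := by
  simp [initialSegment, Encodable.decode₂_eq_some]

theorem initialSegment_subset_of_le {m n : ℕ} (h : m ≤ n) :
    (initialSegment m : List Q) ⊆ initialSegment n :=
  fun _ hq => mem_initialSegment.2 ((mem_initialSegment.1 hq).trans_le h)

theorem exists_subset_initialSegment (L : List Q) : ∃ n, L ⊆ initialSegment n := by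
  obtain ⟨n, hn⟩ := (L.map Encodable.encode).toFinset.exists_nat_subset_range
  exact ⟨n, fun q hq => mem_initialSegment.2 <| Finset.mem_range.1 <|
    hn (List.mem_toFinset.2 (List.mem_map_of_mem hq))⟩

end InitialSegment

section LeastModulus

variable {Q A B : Type*} (D : Set (Q → A)) (G : (Q → A) → B)

def StableOn (φ : Q → A) (L : List Q) : Prop :=
  ∀ ψ ∈ D, agreeOn φ ψ L → G ψ = G φ

variable {D G}

theorem StableOn.mono {φ : Q → A} {L L' : List Q} (hL : L ⊆ L') (h : StableOn D G φ L) :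
    StableOn D G φ L' :=
  fun ψ hψ hagree => h ψ hψ (hagree.mono hL)

theorem StableOn.of_agreeOn {φ ψ : Q → A} {L : List Q} (h : StableOn D G φ L) (hψ : ψ ∈ D)
    (hagree : agreeOn φ ψ L) : StableOn D G ψ L :=
  fun χ hχ hψχ => (h χ hχ (hagree.trans hψχ)).trans (h ψ hψ hagree).symm

variable [Encodable Q]

variable (D G) in
open Classical in
/-- Junk value `0` when no initial segment works for `φ`. -/
noncomputable def leastModulus (φ : Q → A) : ℕ :=
  if h : ∃ n, StableOn D G φ (initialSegment n) then Nat.find h else 0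

theorem stableOn_leastModulus {φ : Q → A} (h : ∃ n, StableOn D G φ (initialSegment n)) :
    StableOn D G φ (initialSegment (leastModulus D G φ)) := by
  classical
  rw [leastModulus, dif_pos h]
  exact Nat.find_spec h

theorem leastModulus_le {φ : Q → A} {n : ℕ} (h : StableOn D G φ (initialSegment n)) :
    leastModulus D G φ ≤ n := by
  classical
  rw [leastModulus, dif_pos ⟨n, h⟩]
  exact Nat.find_min' _ h

theorem leastModulus_eq_of_agreeOn {φ ψ : Q → A} (hφ : φ ∈ D)
    (hstable : ∃ n, StableOn D G φ (initialSegment n)) (hψ : ψ ∈ D)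
    (hagree : agreeOn φ ψ (initialSegment (leastModulus D G φ))) :
    leastModulus D G φ = leastModulus D G ψ := by
  have hψ_stable := (stableOn_leastModulus hstable).of_agreeOn hψ hagree
  have hψ_le : leastModulus D G ψ ≤ leastModulus D G φ := leastModulus_le hψ_stable
  have hagree' : agreeOn ψ φ (initialSegment (leastModulus D G ψ)) :=
    (hagree.mono (initialSegment_subset_of_le hψ_le)).symm
  have hφ_le : leastModulus D G φ ≤ leastModulus D G ψ :=
    leastModulus_le ((stableOn_leastModulus ⟨_, hψ_stable⟩).of_agreeOn hφ hagree')
  exact le_antisymm hφ_le hψ_le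

end LeastModulus

theorem exists_self_modulating_modulus_general
    {Q A Q' A' : Type*} [Countable Q]
    (D : Set (Q → A)) (F : (Q → A) → (Q' → A'))
    (hF : ∀ φ ∈ D, ∀ q' : Q', ∃ L : List Q,
      ∀ ψ ∈ D, agreeOn φ ψ L → F ψ q' = F φ q') :
    ∃ μ : (Q → A) → Q' → List Q,
      (∀ φ ∈ D, ∀ ψ ∈ D, ∀ q' : Q',
        agreeOn φ ψ (μ φ q') → F φ q' = F ψ q') ∧
      (∀ φ ∈ D, ∀ ψ ∈ D, ∀ q' : Q',
        agreeOn φ ψ (μ φ q') → μ φ q' = μ ψ q') := by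
  have := Encodable.ofCountable Q
  have hstable : ∀ φ ∈ D, ∀ q', ∃ n, StableOn D (F · q') φ (initialSegment n) := by
    intro φ hφ q'
    obtain ⟨L, hL⟩ := hF φ hφ q'
    obtain ⟨n, hn⟩ := exists_subset_initialSegment L
    exact ⟨n, StableOn.mono hn hL⟩
  refine ⟨fun φ q' => initialSegment (leastModulus D (F · q') φ), ?_, ?_⟩
  · intro φ hφ ψ hψ q' hagree
    exact (stableOn_leastModulus (hstable φ hφ q') ψ hψ hagree).symm
  · intro φ hφ ψ hψ q' hagree
    exact congrArg initialSegment (leastModulus_eq_of_agreeOn hφ (hstable φ hφ q') hψ hagree)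

/-- Every continuous partial operator `F` (with domain `D`) from `Q → A` to `Q' → A'`
has a self-modulating modulus of continuity. -/
theorem exists_self_modulating_modulus
    {Q A Q' A' : Type*} [Countable Q] [Countable A] [Countable Q'] [Countable A']
    (D : Set (Q → A)) (F : (Q → A) → (Q' → A'))
    (hF : ∀ φ ∈ D, ∀ q' : Q', ∃ L : List Q,
      ∀ ψ ∈ D, agreeOn φ ψ L → F ψ q' = F φ q') :
    ∃ μ : (Q → A) → Q' → List Q,
      (∀ φ ∈ D, ∀ ψ ∈ D, ∀ q' : Q',
        agreeOn φ ψ (μ φ q') → F φ q' = F ψ q') ∧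
      (∀ φ ∈ D, ∀ ψ ∈ D, ∀ q' : Q',
        agreeOn φ ψ (μ φ q') → μ φ q' = μ ψ q') :=
  exists_self_modulating_modulus_general D F hF
end

section
/- The modulus μ that assigns to each φ ∈ dom F and q' the minimal initial segment (q_0,...,q_n) of a fixed enumeration of Q satisfying the continuity implication for F is itself self-modulating. -/
/-- The initial segment `(q_0, …, q_{n-1})` of the enumeration `e`. -/
def initSeg {Q : Type*} (e : ℕ → Q) (n : ℕ) : List Q :=
  (List.range n).map e

lemma initSeg_mono {Q : Type*} (e : ℕ → Q) {m n : ℕ} (h : m ≤ n)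
    {φ ψ : Q → A} (ha : agreeOn φ ψ (initSeg e n)) : agreeOn φ ψ (initSeg e m) := by
  intro q hq
  apply ha
  simp only [initSeg, List.mem_map, List.mem_range] at hq ⊢
  obtain ⟨k, hk, rfl⟩ := hq
  exact ⟨k, lt_of_lt_of_le hk h, rfl⟩

/-- The minimal-initial-segment modulus of a continuous operator is self-modulating:
if `μ φ q'` is always the shortest initial segment of a fixed enumeration of `Q`
satisfying the continuity implication for `F`, then whenever `φ` and `ψ`
agree on `μ φ q'`, we have `μ φ q' = μ ψ q'`. -/
theorem minimal_modulus_self_modulating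
    {Q A Q' A' : Type*} (e : ℕ → Q) (he : Function.Surjective e)
    (D : Set (Q → A)) (F : (Q → A) → (Q' → A'))
    (hF : ∀ φ ∈ D, ∀ q' : Q', ∃ L : List Q,
      ∀ ψ ∈ D, agreeOn φ ψ L → F ψ q' = F φ q')
    (μ : (Q → A) → Q' → List Q)
    (hμ : ∀ φ ∈ D, ∀ q' : Q', ∃ n : ℕ,
      μ φ q' = initSeg e n ∧
      (∀ ψ ∈ D, agreeOn φ ψ (initSeg e n) → F ψ q' = F φ q') ∧
      (∀ m < n, ¬ ∀ ψ ∈ D, agreeOn φ ψ (initSeg e m) → F ψ q' = F φ q')) :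
    ∀ φ ∈ D, ∀ ψ ∈ D, ∀ q' : Q',
      agreeOn φ ψ (μ φ q') → μ φ q' = μ ψ q' := by
  intro φ hφ ψ hψ q' hagree
  obtain ⟨n, hn, hgood, hmin⟩ := hμ φ hφ q'
  obtain ⟨m, hm, hgood', hmin'⟩ := hμ ψ hψ q'
  rw [hn] at hagree ⊢
  rw [hm]
  have hFψφ : F ψ q' = F φ q' := hgood ψ hψ hagree
  -- ψ's condition holds at n
  have hψn : ∀ ψ' ∈ D, agreeOn ψ ψ' (initSeg e n) → F ψ' q' = F ψ q' := by
    intro ψ' hψ' ha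
    have : agreeOn φ ψ' (initSeg e n) := fun q hq => (hagree q hq).trans (ha q hq)
    rw [hgood ψ' hψ' this, hFψφ]
  rcases lt_trichotomy m n with h | h | h
  · -- then φ's condition holds at m, contradiction with hmin
    exfalso
    apply hmin m h
    intro ψ' hψ' ha
    have hφψm : agreeOn φ ψ (initSeg e m) := initSeg_mono e h.le hagree
    have : agreeOn ψ ψ' (initSeg e m) := fun q hq => ((hφψm q hq).symm).trans (ha q hq)
    rw [hgood' ψ' hψ' this, hFψφ]
  · rw [h]
  · exact absurd hψn (hmin' n h)
end

section
/- Multifunction composition is associative: for multifunctions F : Y ⇉ Z, G : X ⇉ Y, H : W ⇉ X, we have (F ∘ G) ∘ H = F ∘ (G ∘ H). -/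
/-- The domain of a multifunction. -/
def mdom {X Y : Type*} (F : X → Set Y) : Set X := {x | (F x).Nonempty}

/-- Multifunction composition. -/
def mcomp {X Y Z : Type*} (F : Y → Set Z) (G : X → Set Y) : X → Set Z :=
  fun x => {z | G x ⊆ mdom F ∧ ∃ y ∈ G x, z ∈ F y}

/-- Multifunction composition is associative. -/
theorem mcomp_assoc {W X Y Z : Type*}
    (F : Y → Set Z) (G : X → Set Y) (H : W → Set X) :
    mcomp (mcomp F G) H = mcomp F (mcomp G H) := by
  funext w
  ext z
  constructor
  · rintro ⟨hdom, x, hx, hGF, y, hy, hz⟩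
    -- hdom : H w ⊆ mdom (mcomp F G)
    have hHG : H w ⊆ mdom G := by
      intro x' hx'
      obtain ⟨z', hsub', y'', hy'', _⟩ := hdom hx'
      exact ⟨y'', hy''⟩
    refine ⟨?_, y, ⟨hHG, x, hx, hy⟩, hz⟩
    rintro y' ⟨-, x', hx', hy'⟩
    obtain ⟨z', hsub', -⟩ := hdom hx'
    exact hsub' hy'
  · rintro ⟨hdom, y, ⟨hHG, x, hx, hy⟩, hz⟩
    have hGF : ∀ x' ∈ H w, G x' ⊆ mdom F := by
      intro x' hx' y' hy'
      exact hdom ⟨hHG, x', hx', hy'⟩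
    have hmem : H w ⊆ mdom (mcomp F G) := by
      intro x' hx'
      obtain ⟨y'', hy''⟩ := hHG hx'
      obtain ⟨z'', hz''⟩ := hGF x' hx' hy''
      exact ⟨z'', hGF x' hx', y'', hy'', hz''⟩
    exact ⟨hmem, x, hx, hGF x hx, y, hy, hz⟩
end

section
/- The operator F(φ)(n) := some (0 < φ(2^{-n})) if |φ(2^{-n})| > 3·2^{-n}, else none, is a realizer of the Kleenean sign function: if φ is a rational Cauchy name of x ∈ ℝ (i.e., ∀ ε>0 rational, |x − φ(ε)| ≤ ε), then F(φ) is a Kleenean name of sign_K(x), which is ⊥_K if x = 0 and the Kleenean Boolean (0 < x)_K otherwise. -/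
/-! If `φ` names `x`, the test at precision `ε = 2⁻ⁿ` never fires for `x = 0` (there
`|φ ε| ≤ ε`), reports the correct sign whenever it fires (then `|φ ε| > ε`, so `φ ε` and `x`
lie on the same side of `0`), and fires as soon as `4ε < |x|`. The first `n` at which it
fires is therefore the first non-`none` value, and it carries `decide (0 < x)`. -/

/-- The realizer of the Kleenean sign function. -/
noncomputable def signRealizer (φ : ℚ → ℚ) (n : ℕ) : Option Bool :=
  if 3 * ((2:ℚ)^n)⁻¹ < |φ (((2:ℚ)^n)⁻¹)| then some (decide (0 < φ (((2:ℚ)^n)⁻¹)))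
  else none

theorem signRealizer_eq_none_iff (φ : ℚ → ℚ) (n : ℕ) :
    signRealizer φ n = none ↔ |φ ((2 : ℚ) ^ n)⁻¹| ≤ 3 * ((2 : ℚ) ^ n)⁻¹ := by
  simp [signRealizer]

def IsRatName (x : ℝ) (φ : ℚ → ℚ) : Prop :=
  ∀ ε : ℚ, 0 < ε → |x - (φ ε : ℝ)| ≤ (ε : ℝ)

section OrderedField

variable {α : Type*} [Field α] [LinearOrder α] [IsStrictOrderedRing α]

theorem pos_iff_pos_of_abs_sub_le_of_lt_abs {x q ε : α} (h : |x - q| ≤ ε) (hq : ε < |q|) :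
    0 < q ↔ 0 < x := by
  obtain ⟨hxq, hqx⟩ := abs_sub_le_iff.mp h
  constructor
  · intro hq₀
    rw [abs_of_pos hq₀] at hq
    linarith
  · intro hx₀
    by_contra! hq₀
    rw [abs_of_nonpos hq₀] at hq
    linarith

theorem lt_abs_of_abs_sub_le {x q ε a : α} (h : |x - q| ≤ ε) (hx : a + ε < |x|) : a < |q| := by
  linarith [abs_sub_abs_le_abs_sub x q]

end OrderedField

namespace IsRatName

variable {x : ℝ} {φ : ℚ → ℚ} {ε : ℚ}

theorem abs_le_of_eq_zero (hφ : IsRatName 0 φ) (hε : 0 < ε) : |φ ε| ≤ ε := by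
  have h := hφ ε hε
  rwa [zero_sub, abs_neg, ← Rat.cast_abs, Rat.cast_le] at h

theorem pos_iff_pos (hφ : IsRatName x φ) (hε : 0 < ε) (hq : ε < |φ ε|) : 0 < φ ε ↔ 0 < x := by
  rw [← Rat.cast_pos (K := ℝ)]
  exact pos_iff_pos_of_abs_sub_le_of_lt_abs (hφ ε hε) (by rwa [← Rat.cast_abs, Rat.cast_lt])

theorem lt_abs (hφ : IsRatName x φ) (hε : 0 < ε) {a : ℚ} (hx : a + ε < |x|) : a < |φ ε| := by
  rw [← Rat.cast_lt (K := ℝ), Rat.cast_abs]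
  exact lt_abs_of_abs_sub_le (hφ ε hε) hx

theorem signRealizer_eq_none_of_eq_zero (hφ : IsRatName 0 φ) (n : ℕ) :
    signRealizer φ n = none := by
  have hε : (0 : ℚ) < ((2 : ℚ) ^ n)⁻¹ := by positivity
  rw [signRealizer_eq_none_iff]
  linarith [hφ.abs_le_of_eq_zero hε]

theorem signRealizer_eq_some_of_ne_none (hφ : IsRatName x φ) {n : ℕ}
    (hn : signRealizer φ n ≠ none) : signRealizer φ n = some (decide (0 < x)) := by
  have hε : (0 : ℚ) < ((2 : ℚ) ^ n)⁻¹ := by positivity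
  have htest : 3 * ((2 : ℚ) ^ n)⁻¹ < |φ ((2 : ℚ) ^ n)⁻¹| := by
    simpa [signRealizer_eq_none_iff] using hn
  have hsign := hφ.pos_iff_pos hε (by linarith)
  simp only [signRealizer, if_pos htest, hsign]

theorem exists_signRealizer_ne_none (hφ : IsRatName x φ) (hx : x ≠ 0) :
    ∃ n, signRealizer φ n ≠ none := by
  obtain ⟨n, hn⟩ := exists_pow_lt_of_lt_one (div_pos (abs_pos.mpr hx) (by norm_num : (0 : ℝ) < 4))
    (by norm_num : (2⁻¹ : ℝ) < 1)
  rw [inv_pow, lt_div_iff₀ (by norm_num)] at hn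
  refine ⟨n, fun hnone => ?_⟩
  have hfires := hφ.lt_abs (ε := ((2 : ℚ) ^ n)⁻¹) (a := 3 * ((2 : ℚ) ^ n)⁻¹) (by positivity)
    (by push_cast; linarith)
  exact ((signRealizer_eq_none_iff φ n).mp hnone).not_gt hfires

end IsRatName

/-- `signRealizer` realizes the Kleenean sign function: if `φ` is a rational name of
`x` then `signRealizer φ` is a Kleenean name of `⊥_K` when `x = 0` and of the
Kleenean Boolean `(0 < x)_K` when `x ≠ 0`. -/
theorem signRealizer_correct (x : ℝ) (φ : ℚ → ℚ)
    (hφ : ∀ ε : ℚ, 0 < ε → |x - (φ ε : ℝ)| ≤ (ε : ℝ)) :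
    (x = 0 → ∀ n : ℕ, signRealizer φ n = none) ∧
    (x ≠ 0 → ∃ n : ℕ, signRealizer φ n = some (decide (0 < x)) ∧
      ∀ m < n, signRealizer φ m = none) := by
  have hname : IsRatName x φ := hφ
  refine ⟨fun hx => (hx ▸ hname).signRealizer_eq_none_of_eq_zero, fun hx => ?_⟩
  have hfires := hname.exists_signRealizer_ne_none hx
  refine ⟨Nat.find hfires, hname.signRealizer_eq_some_of_ne_none (Nat.find_spec hfires),
    fun m hm => ?_⟩
  simpa using Nat.find_min hfires hm
end

section
/- The machine M for real inversion is correct: for every real x ≠ 0 and every rational name φ of x, (1) there exists n such that for all ε, M(φ)(n,ε) ≠ none, and (2) whenever M(φ)(n,ε) = some r, we have |r − 1/x| ≤ ε. Here M(φ)(n,ε) := some (1/φ(min{δ, ε·δ²}/2)) where δ := |φ(2^{-n})| − 2^{-n}, if δ > 0, and none otherwise. -/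
/-- The machine computing multiplicative inversion in the rational representation. -/
noncomputable def invMachine (φ : ℚ → ℚ) (n : ℕ) (ε : ℚ) : Option ℚ :=
  let δ : ℚ := |φ (((2:ℚ)^n)⁻¹)| - ((2:ℚ)^n)⁻¹
  if 0 < δ then some (φ (min δ (ε * δ^2) / 2))⁻¹ else none

/-- Correctness of the inversion machine: for every real `x ≠ 0` and every rational
name `φ` of `x`, (1) there is an effort `n` for which the machine answers every
question, and (2) any answer `r` to an accuracy question `ε > 0` satisfies
`|r - 1/x| ≤ ε`. -/
theorem invMachine_correct (x : ℝ) (hx : x ≠ 0) (φ : ℚ → ℚ)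
    (hφ : ∀ ε : ℚ, 0 < ε → |x - (φ ε : ℝ)| ≤ (ε : ℝ)) :
    (∃ n : ℕ, ∀ ε : ℚ, invMachine φ n ε ≠ none) ∧
    (∀ (n : ℕ) (ε : ℚ), 0 < ε → ∀ r : ℚ,
      invMachine φ n ε = some r → |(r : ℝ) - 1 / x| ≤ (ε : ℝ)) := by
  have hax : 0 < |x| := abs_pos.mpr hx
  constructor
  · obtain ⟨n, hn⟩ : ∃ n : ℕ, ((2:ℝ)^n)⁻¹ < |x| / 2 := by
      obtain ⟨n, hn⟩ := pow_unbounded_of_one_lt (2 / |x|) one_lt_two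
      refine ⟨n, ?_⟩
      rw [div_lt_iff₀ (by linarith)] at hn
      rw [inv_lt_iff_one_lt_mul₀ (by positivity)]
      nlinarith [pow_pos (show (0:ℝ) < 2 by norm_num) n]
    refine ⟨n, fun ε => ?_⟩
    have hq : (0:ℚ) < ((2:ℚ)^n)⁻¹ := by positivity
    have h1 := hφ _ hq
    have hqr : (((((2:ℚ)^n)⁻¹ : ℚ)) : ℝ) = ((2:ℝ)^n)⁻¹ := by push_cast; ring
    rw [hqr] at h1
    have h2 : ((2:ℝ)^n)⁻¹ < ((|φ (((2:ℚ)^n)⁻¹)| : ℚ) : ℝ) := by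
      have h3 := abs_sub_abs_le_abs_sub x (φ (((2:ℚ)^n)⁻¹) : ℝ)
      push_cast
      linarith
    rw [← hqr] at h2
    have h4 : ((2:ℚ)^n)⁻¹ < |φ (((2:ℚ)^n)⁻¹)| := by exact_mod_cast h2
    have hδ : (0:ℚ) < |φ (((2:ℚ)^n)⁻¹)| - ((2:ℚ)^n)⁻¹ := by linarith
    simp [invMachine, hδ]
  · intro n ε hε r hr
    unfold invMachine at hr
    set δ : ℚ := |φ (((2:ℚ)^n)⁻¹)| - ((2:ℚ)^n)⁻¹ with hδdef
    by_cases hδ : 0 < δ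
    · rw [if_pos hδ] at hr
      have hr' : r = (φ (min δ (ε * δ^2) / 2))⁻¹ := by
        injection hr with h; exact h.symm
      set μ : ℚ := min δ (ε * δ^2) / 2 with hμdef
      have hμ : 0 < μ := by
        apply div_pos _ (by norm_num)
        exact lt_min hδ (by positivity)
      have hμδ : μ ≤ δ / 2 := by
        rw [hμdef]; gcongr; exact min_le_left _ _
      have hμε : μ ≤ ε * δ^2 / 2 := by
        rw [hμdef]; gcongr; exact min_le_right _ _
      -- |x| ≥ δ
      have hq : (0:ℚ) < ((2:ℚ)^n)⁻¹ := by positivity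
      have h1 := hφ _ hq
      have hxδ : (δ : ℝ) ≤ |x| := by
        have h3 := abs_sub_abs_le_abs_sub (φ (((2:ℚ)^n)⁻¹) : ℝ) x
        rw [abs_sub_comm] at h3
        rw [hδdef]; push_cast at h1 ⊢
        linarith
      -- |φ μ| ≥ δ/2
      have h2 := hφ _ hμ
      have hφμ : (δ : ℝ) / 2 ≤ |(φ μ : ℝ)| := by
        have h3 := abs_sub_abs_le_abs_sub x (φ μ : ℝ)
        have hμδ' : (μ : ℝ) ≤ (δ : ℝ) / 2 := by exact_mod_cast hμδ
        linarith
      have hδpos : (0:ℝ) < (δ : ℝ) := by exact_mod_cast hδ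
      have hφμne : (φ μ : ℝ) ≠ 0 := by
        intro h; rw [h] at hφμ; simp at hφμ; linarith
      have hrc : (r : ℝ) = ((φ μ : ℝ))⁻¹ := by rw [hr']; push_cast; ring
      rw [hrc]
      have key : ((φ μ : ℝ))⁻¹ - 1 / x = (x - (φ μ : ℝ)) / ((φ μ : ℝ) * x) := by
        field_simp
      rw [key, abs_div, abs_mul]
      have hden : (δ : ℝ) / 2 * (δ : ℝ) ≤ |(φ μ : ℝ)| * |x| := by
        apply mul_le_mul hφμ hxδ (le_of_lt hδpos) (abs_nonneg _)
      have hdenpos : (0:ℝ) < (δ : ℝ) / 2 * (δ : ℝ) := by positivity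
      calc |x - (φ μ : ℝ)| / (|(φ μ : ℝ)| * |x|)
          ≤ (μ : ℝ) / ((δ : ℝ) / 2 * (δ : ℝ)) :=
            div_le_div₀ (by exact_mod_cast hμ.le) h2 hdenpos hden
        _ ≤ (ε : ℝ) := by
            rw [div_le_iff₀ hdenpos]
            have hμε' : (μ : ℝ) ≤ (ε : ℝ) * (δ : ℝ)^2 / 2 := by exact_mod_cast hμε
            nlinarith
    · rw [if_neg hδ] at hr; exact absurd hr (by simp)
end

section
/- For every continuous partial operator F : ⊆B → B' there exists a continuous machine implementing it: there is M : B → (ℕ × Q' → option A') and a self-modulating modulus μ of M such that F_M tightens F (i.e., F_M is single-valued on dom F and coincides with F there, with dom F ⊆ dom F_M). -/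
/-- The multifunction computed by a machine `M`. -/
def FM {Q A Q' A' : Type*} (M : (Q → A) → (ℕ × Q' → Option A'))
    (φ : Q → A) : Set (Q' → A') :=
  {ψ | ∀ q' : Q', ∃ n : ℕ, M φ (n, q') = some (ψ q')}

/-- Every continuous partial operator `F` (with domain `D`) is implemented by a
continuous machine: there are `M` and a total self-modulating modulus `μ` of `M`
such that `F_M` tightens `F`. -/
theorem exists_continuous_machine
    {Q A Q' A' : Type*} [Countable Q] [Countable A] [Countable Q'] [Countable A']
    (D : Set (Q → A)) (F : (Q → A) → (Q' → A'))
    (hF : ∀ φ ∈ D, ∀ q' : Q', ∃ L : List Q,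
      ∀ ψ ∈ D, agreeOn φ ψ L → F ψ q' = F φ q') :
    ∃ (M : (Q → A) → (ℕ × Q' → Option A'))
      (μ : (Q → A) → ℕ × Q' → List Q),
      (∀ (φ ψ : Q → A) (p : ℕ × Q'), agreeOn φ ψ (μ φ p) → M φ p = M ψ p) ∧
      (∀ (φ ψ : Q → A) (p : ℕ × Q'), agreeOn φ ψ (μ φ p) → μ φ p = μ ψ p) ∧
      (∀ φ ∈ D, (FM M φ).Nonempty ∧ FM M φ ⊆ {F φ}) := by
  classical
  obtain ⟨e, he⟩ := exists_surjective_nat (List Q)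
  -- predicate: list `e n` decides `q'` at some element of `D` agreeing with `φ`
  set P : (Q → A) → ℕ → Q' → Prop := fun φ n q' =>
    ∃ χ, χ ∈ D ∧ agreeOn χ φ (e n) ∧
      ∀ ψ' ∈ D, agreeOn χ ψ' (e n) → F ψ' q' = F χ q' with hP
  set M : (Q → A) → (ℕ × Q' → Option A') := fun φ p =>
    if h : P φ p.1 p.2 then some (F h.choose p.2) else none with hM
  -- value uniqueness
  have key : ∀ (φ ψ : Q → A) (n : ℕ) (q' : Q'),
      agreeOn φ ψ (e n) → ∀ (h1 : P φ n q') (h2 : P ψ n q'),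
      F h1.choose q' = F h2.choose q' := by
    intro φ ψ n q' hag h1 h2
    obtain ⟨c1D, c1a, c1d⟩ := h1.choose_spec
    obtain ⟨c2D, c2a, c2d⟩ := h2.choose_spec
    have : agreeOn h1.choose h2.choose (e n) := by
      intro q hq
      rw [c1a q hq, hag q hq, ← c2a q hq]
    exact (c1d _ c2D this).symm
  refine ⟨M, fun _ p => e p.1, ?_, ?_, ?_⟩
  · intro φ ψ p hag
    simp only [hM]
    by_cases h1 : P φ p.1 p.2
    · have h2 : P ψ p.1 p.2 := by
        obtain ⟨χ, hχD, hχa, hχd⟩ := h1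
        exact ⟨χ, hχD, fun q hq => (hχa q hq).trans (hag q hq), hχd⟩
      rw [dif_pos h1, dif_pos h2, key φ ψ p.1 p.2 hag h1 h2]
    · have h2 : ¬ P ψ p.1 p.2 := by
        intro h2
        obtain ⟨χ, hχD, hχa, hχd⟩ := h2
        exact h1 ⟨χ, hχD, fun q hq => (hχa q hq).trans (hag q hq).symm, hχd⟩
      rw [dif_neg h1, dif_neg h2]
  · intro _ _ _ _; rfl
  · intro φ hφ
    constructor
    · refine ⟨F φ, fun q' => ?_⟩
      obtain ⟨L, hL⟩ := hF φ hφ q'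
      obtain ⟨n, rfl⟩ := he L
      have h1 : P φ n q' := ⟨φ, hφ, fun q _ => rfl, hL⟩
      have hself : agreeOn φ φ (e n) := fun q _ => rfl
      obtain ⟨c1D, c1a, c1d⟩ := h1.choose_spec
      refine ⟨n, ?_⟩
      simp only [hM, dif_pos h1]
      have : F φ q' = F h1.choose q' := c1d φ hφ c1a
      rw [this]
    · intro ψ hψ
      have : ψ = F φ := by
        funext q'
        obtain ⟨n, hn⟩ := hψ q'
        simp only [hM] at hn
        split at hn
        · rename_i h1
          obtain ⟨c1D, c1a, c1d⟩ := h1.choose_spec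
          have := c1d φ hφ c1a
          rw [← Option.some_inj.mp hn, this]
        · exact absurd hn (by simp)
      simp [this]
end

section
/- The 'use first' transformation makes machines monotone while preserving semantics: given M, define M^f(φ)(n,q') := M(φ)(m,q') for the least m ≤ n with M(φ)(m,q') ≠ none (and none if no such m exists). Then M^f is monotone, F_{M^f} is single-valued, and F_{M^f} is a choice function for F_M (i.e., F_{M^f} tightens F_M). -/
open scoped Classical

/-- The 'use first' monotonization of a machine: return the value produced by the
least effort `m ≤ n` for which `M` returns a value, if any. -/
noncomputable def useFirst {Q A Q' A' : Type*}
    (M : (Q → A) → (ℕ × Q' → Option A')) :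
    (Q → A) → (ℕ × Q' → Option A') :=
  fun φ p =>
    if h : ∃ m, m ≤ p.1 ∧ M φ (m, p.2) ≠ none then M φ (Nat.find h, p.2)
    else none

theorem useFirst_mono_aux {Q A Q' A' : Type*}
    (M : (Q → A) → (ℕ × Q' → Option A')) (φ : Q → A) (n m : ℕ) (q' : Q') (a' : A')
    (h : useFirst M φ (n, q') = some a') (hnm : n ≤ m) :
    useFirst M φ (m, q') = some a' := by
  unfold useFirst at h ⊢
  dsimp only at h ⊢
  split_ifs at h with h1
  · have h2 : ∃ k, k ≤ m ∧ M φ (k, q') ≠ none :=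
      ⟨Nat.find h1, le_trans (Nat.find_spec h1).1 hnm, (Nat.find_spec h1).2⟩
    rw [dif_pos h2]
    have e21 : Nat.find h2 ≤ Nat.find h1 :=
      Nat.find_le ⟨le_trans (Nat.find_spec h1).1 hnm, (Nat.find_spec h1).2⟩
    have e12 : Nat.find h1 ≤ Nat.find h2 :=
      Nat.find_le ⟨le_trans e21 (Nat.find_spec h1).1, (Nat.find_spec h2).2⟩
    rw [le_antisymm e21 e12]
    exact h

theorem useFirst_sub {Q A Q' A' : Type*}
    (M : (Q → A) → (ℕ × Q' → Option A')) (φ : Q → A) :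
    FM (useFirst M) φ ⊆ FM M φ := by
  intro ψ hψ q'
  obtain ⟨n, hn⟩ := hψ q'
  unfold useFirst at hn
  dsimp only at hn
  split_ifs at hn with h1
  exact ⟨Nat.find h1, hn⟩

/-- The 'use first' transformation produces a monotone machine whose computed
multifunction is single-valued and tightens `F_M`. -/
theorem useFirst_correct {Q A Q' A' : Type*}
    (M : (Q → A) → (ℕ × Q' → Option A')) :
    (∀ (φ : Q → A) (n m : ℕ) (q' : Q') (a' : A'),
      useFirst M φ (n, q') = some a' → n ≤ m → useFirst M φ (m, q') = some a') ∧
    (∀ φ : Q → A, Set.Subsingleton (FM (useFirst M) φ)) ∧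
    (∀ φ : Q → A, (FM M φ).Nonempty → (FM (useFirst M) φ).Nonempty) ∧
    (∀ φ : Q → A, (FM M φ).Nonempty → FM (useFirst M) φ ⊆ FM M φ) := by
  refine ⟨useFirst_mono_aux M, ?_, ?_, fun φ _ => useFirst_sub M φ⟩
  · intro φ ψ₁ h₁ ψ₂ h₂
    funext q'
    obtain ⟨n₁, hn₁⟩ := h₁ q'
    obtain ⟨n₂, hn₂⟩ := h₂ q'
    have e₁ := useFirst_mono_aux M φ n₁ (max n₁ n₂) q' _ hn₁ (le_max_left _ _)
    have e₂ := useFirst_mono_aux M φ n₂ (max n₁ n₂) q' _ hn₂ (le_max_right _ _)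
    rw [e₁] at e₂
    exact (Option.some_injective _ e₂)
  · intro φ ⟨ψ, hψ⟩
    have key : ∀ q' : Q', ∃ (a' : A') (n : ℕ), useFirst M φ (n, q') = some (a') := by
      intro q'
      obtain ⟨n, hn⟩ := hψ q'
      have h1 : ∃ m, m ≤ n ∧ M φ (m, q') ≠ none := ⟨n, le_refl n, by simp [hn]⟩
      have hne : M φ (Nat.find h1, q') ≠ none := (Nat.find_spec h1).2
      obtain ⟨a', ha'⟩ := Option.ne_none_iff_exists'.mp hne
      refine ⟨a', n, ?_⟩
      unfold useFirst
      dsimp only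
      rw [dif_pos h1]
      exact ha'
    choose ψ' n' hψ' using key
    exact ⟨ψ', fun q' => ⟨n' q', hψ' q'⟩⟩
end

section
/- If μ is a self-modulating modulus of M, then μ^f(φ)(n,q') := ⋃_{i ≤ n, ∀ j < i: M(φ)(j,q') = none} μ(φ)(i,q') is a self-modulating modulus of the monotonized machine M^f, and μ^f terminates with M^f (once M^f(φ)(n,q') returns some value, μ^f(φ)(m,q') = μ^f(φ)(n,q') for all m ≥ n). -/
open scoped Classical

/-- The 'use first' modulus: the union of the values `μ φ (i, q')` over all efforts
`i ≤ n` such that `M` returns `none` for all smaller efforts. -/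
noncomputable def useFirstMod {Q A Q' A' : Type*}
    (M : (Q → A) → (ℕ × Q' → Option A'))
    (μ : (Q → A) → ℕ × Q' → List Q) :
    (Q → A) → ℕ × Q' → List Q :=
  fun φ p =>
    ((List.range (p.1 + 1)).filter
      (fun i => decide (∀ j < i, M φ (j, p.2) = none))).flatMap
      (fun i => μ φ (i, p.2))

/-!
Both the monotonized machine and its modulus are determined by a recursion in the effort:
`useFirst M φ (n + 1, q')` is `useFirst M φ (n, q')` unless that is `none`, in which case it is
`M φ (n + 1, q')`, and `useFirstMod M μ φ (n + 1, q')` extends `useFirstMod M μ φ (n, q')` by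
`μ φ (n + 1, q')` exactly in that case. Agreement on the longer list gives agreement on the
shorter one, so all three claims follow by induction on the effort; once `useFirst` has
answered, the modulus is never extended again.
-/

section UseFirst

variable {Q A Q' A' : Type*}

def IsModulus {P B : Type*} (F : (Q → A) → P → B) (μ : (Q → A) → P → List Q) : Prop :=
  ∀ (φ ψ : Q → A) (p : P), agreeOn φ ψ (μ φ p) → F φ p = F ψ p

lemma agreeOn_append {φ ψ : Q → A} {L₁ L₂ : List Q} :
    agreeOn φ ψ (L₁ ++ L₂) ↔ agreeOn φ ψ L₁ ∧ agreeOn φ ψ L₂ :=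
  List.forall_mem_append

section Recursion

variable (M : (Q → A) → (ℕ × Q' → Option A')) (φ : Q → A) (q' : Q')

lemma useFirst_eq_none_iff (n : ℕ) :
    useFirst M φ (n, q') = none ↔ ∀ j ≤ n, M φ (j, q') = none := by
  unfold useFirst
  split_ifs with h
  · obtain ⟨hle, hans⟩ := Nat.find_spec h
    simp only [hans, false_iff, not_forall]
    exact ⟨_, hle, hans⟩
  · push Not at h
    simpa using h

lemma useFirst_eq_of_forall_lt_eq_none {n i : ℕ} (hi : i ≤ n)
    (hsilent : ∀ j < i, M φ (j, q') = none) (hans : M φ (i, q') ≠ none) :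
    useFirst M φ (n, q') = M φ (i, q') := by
  have h : ∃ m, m ≤ n ∧ M φ (m, q') ≠ none := ⟨i, hi, hans⟩
  have hfind : Nat.find h = i :=
    (Nat.find_eq_iff h).2 ⟨⟨hi, hans⟩, fun j hj hj' => hj'.2 (hsilent j hj)⟩
  rw [useFirst, dif_pos h, hfind]

lemma useFirst_zero : useFirst M φ (0, q') = M φ (0, q') := by
  by_cases hans : M φ (0, q') = none
  · rw [hans, useFirst_eq_none_iff]
    simpa using hans
  · exact useFirst_eq_of_forall_lt_eq_none M φ q' le_rfl (by simp) hans

lemma useFirst_succ (n : ℕ) :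
    useFirst M φ (n + 1, q') = (useFirst M φ (n, q')).or (M φ (n + 1, q')) := by
  by_cases h : ∃ m, m ≤ n ∧ M φ (m, q') ≠ none
  · obtain ⟨hle, hans⟩ := Nat.find_spec h
    have hsilent : ∀ j < Nat.find h, M φ (j, q') = none := fun j hj =>
      not_not.1 fun hne => Nat.find_min h hj ⟨by omega, hne⟩
    rw [useFirst_eq_of_forall_lt_eq_none M φ q' hle hsilent hans,
      useFirst_eq_of_forall_lt_eq_none M φ q' (by omega) hsilent hans,
      Option.or_of_isSome (Option.ne_none_iff_isSome.1 hans)]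
  · push Not at h
    rw [(useFirst_eq_none_iff M φ q' n).2 h, Option.none_or]
    by_cases hans : M φ (n + 1, q') = none
    · rw [hans, useFirst_eq_none_iff]
      intro j hj
      rcases hj.lt_or_eq with hj | rfl
      exacts [h j (by omega), hans]
    · exact useFirst_eq_of_forall_lt_eq_none M φ q' le_rfl (fun j hj => h j (by omega)) hans

lemma useFirst_ne_none_of_le {n m : ℕ} (hnm : n ≤ m) (h : useFirst M φ (n, q') ≠ none) :
    useFirst M φ (m, q') ≠ none := by
  rw [ne_eq, useFirst_eq_none_iff] at h ⊢
  exact fun hm => h fun j hj => hm j (hj.trans hnm)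

lemma useFirstMod_zero (μ : (Q → A) → ℕ × Q' → List Q) :
    useFirstMod M μ φ (0, q') = μ φ (0, q') := by
  simp [useFirstMod]

lemma useFirstMod_succ (μ : (Q → A) → ℕ × Q' → List Q) (n : ℕ) :
    useFirstMod M μ φ (n + 1, q') = useFirstMod M μ φ (n, q') ++
      if useFirst M φ (n, q') = none then μ φ (n + 1, q') else [] := by
  simp only [useFirstMod, List.range_succ, List.filter_append, List.flatMap_append]
  congr 1
  split_ifs with h <;> simp [← useFirst_eq_none_iff, h]

end Recursion

section Modulus

variable {M : (Q → A) → (ℕ × Q' → Option A')} {μ : (Q → A) → ℕ × Q' → List Q}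

lemma isModulus_useFirst (hmod : IsModulus M μ) : IsModulus (useFirst M) (useFirstMod M μ) := by
  rintro φ ψ ⟨n, q'⟩ hag
  induction n with
  | zero =>
    rw [useFirstMod_zero] at hag
    rw [useFirst_zero, useFirst_zero]
    exact hmod φ ψ _ hag
  | succ n ih =>
    rw [useFirstMod_succ, agreeOn_append] at hag
    rw [useFirst_succ, useFirst_succ, ← ih hag.1]
    cases h : useFirst M φ (n, q') with
    | none =>
      rw [h, if_pos rfl] at hag
      exact congrArg _ (hmod φ ψ _ hag.2)
    | some a => rfl

lemma isModulus_useFirstMod (hmod : IsModulus M μ) (hself : IsModulus μ μ) :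
    IsModulus (useFirstMod M μ) (useFirstMod M μ) := by
  rintro φ ψ ⟨n, q'⟩ hag
  induction n with
  | zero =>
    simp only [useFirstMod_zero] at hag ⊢
    exact hself φ ψ _ hag
  | succ n ih =>
    rw [useFirstMod_succ, agreeOn_append] at hag
    rw [useFirstMod_succ, useFirstMod_succ, ← isModulus_useFirst hmod φ ψ _ hag.1, ih hag.1]
    split_ifs at hag ⊢
    · rw [hself φ ψ _ hag.2]
    · rfl

lemma useFirstMod_eq_of_le {φ : Q → A} {q' : Q'} {n m : ℕ} (h : useFirst M φ (n, q') ≠ none)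
    (hnm : n ≤ m) : useFirstMod M μ φ (m, q') = useFirstMod M μ φ (n, q') := by
  induction m, hnm using Nat.le_induction with
  | base => rfl
  | succ m hnm ih =>
    rw [useFirstMod_succ, if_neg (useFirst_ne_none_of_le M φ q' hnm h), List.append_nil, ih]

end Modulus

end UseFirst

/-- If `μ` is a self-modulating modulus of `M`, then `useFirstMod M μ` is a
self-modulating modulus of the monotonized machine `useFirst M`, and it terminates
with `useFirst M`. -/
theorem useFirstMod_correct {Q A Q' A' : Type*}
    (M : (Q → A) → (ℕ × Q' → Option A'))
    (μ : (Q → A) → ℕ × Q' → List Q)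
    (hmod : ∀ (φ ψ : Q → A) (p : ℕ × Q'), agreeOn φ ψ (μ φ p) → M φ p = M ψ p)
    (hself : ∀ (φ ψ : Q → A) (p : ℕ × Q'), agreeOn φ ψ (μ φ p) → μ φ p = μ ψ p) :
    (∀ (φ ψ : Q → A) (p : ℕ × Q'),
      agreeOn φ ψ (useFirstMod M μ φ p) → useFirst M φ p = useFirst M ψ p) ∧
    (∀ (φ ψ : Q → A) (p : ℕ × Q'),
      agreeOn φ ψ (useFirstMod M μ φ p) → useFirstMod M μ φ p = useFirstMod M μ ψ p) ∧
    (∀ (φ : Q → A) (n : ℕ) (q' : Q'), useFirst M φ (n, q') ≠ none →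
      ∀ m, n ≤ m → useFirstMod M μ φ (m, q') = useFirstMod M μ φ (n, q')) :=
  ⟨isModulus_useFirst hmod, isModulus_useFirstMod hmod hself,
    fun _ _ _ h _ hnm => useFirstMod_eq_of_le h hnm⟩
end
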